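/- With the parameter values α1 = 0.2, α2 = 0.3, β1 = 0.3, β2 = 0.5, δ1 = 0.2, δ2 = 0.3, γ1 = 0.03, γ2 = 0.04, μ = 0.1, N = 10000, the Jacobian of the reduced system at the fixed point (0, D2*) with D2* = 78000/11 is lower triangular with both diagonal entries negative; hence this fixed point is a stable node (both eigenvalues negative, approximately −0.044 and −0.39). -/

import Mathlib

/-!
Each right-hand side is, in its own species, a logistic term with competition,
`r x - (x / N) (p x + q y)`, whose partial derivative in `x` is `r - (2 p x + q y) / N`.
On the axis `D1 = 0` the first equation vanishes identically, so the Jacobian is lower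
triangular there and its eigenvalues are the two diagonal entries, which are evaluated
numerically.
-/

lemma hasDerivAt_competition_left (r p q N y x : ℝ) :
    HasDerivAt (fun x => r * x - x / N * (p * x + q * y)) (r - (2 * p * x + q * y) / N) x := by
  have h := ((hasDerivAt_id' x).const_mul r).fun_sub
    (((hasDerivAt_id' x).div_const N).fun_mul (((hasDerivAt_id' x).const_mul p).add_const (q * y)))
  exact h.congr_deriv (by ring)

lemma hasDerivAt_competition_right (s u v N x y : ℝ) :
    HasDerivAt (fun y => s * y - y / N * (u * x + v * y)) (s - (u * x + 2 * v * y) / N) y := by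
  simpa only [add_comm] using hasDerivAt_competition_left s v u N x y

theorem D2_axis_fixed_point_stable_node
    (α1 α2 β1 β2 δ1 δ2 γ1 γ2 μ N : ℝ)
    (hα1 : α1 = 0.2) (hα2 : α2 = 0.3) (hβ1 : β1 = 0.3) (hβ2 : β2 = 0.5)
    (hδ1 : δ1 = 0.2) (hδ2 : δ2 = 0.3) (hγ1 : γ1 = 0.03) (hγ2 : γ2 = 0.04)
    (hμ : μ = 0.1) (hN : N = 10000)
    (f1 f2 : ℝ → ℝ → ℝ)
    (hf1 : ∀ D1 D2, f1 D1 D2 =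
      (β1 - μ - δ1 * γ1 / (δ1 + μ)) * D1 -
        (D1 / N) * (β1 * (γ1 / (δ1 + μ) + 1) * D1 +
          (β1 * (γ2 / (δ2 + μ) + 1) - α1 + α2) * D2))
    (hf2 : ∀ D1 D2, f2 D1 D2 =
      (β2 - μ - δ2 * γ2 / (δ2 + μ)) * D2 -
        (D2 / N) * ((β2 * (γ1 / (δ1 + μ) + 1) + α1 - α2) * D1 +
          β2 * (γ2 / (δ2 + μ) + 1) * D2))
    (D2star : ℝ) (hD2star : D2star = 78000 / 11) :
    ∃ j11 j22 : ℝ,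
      -- lower triangular: the (1,2)-entry of the Jacobian vanishes
      HasDerivAt (fun D2 => f1 0 D2) 0 D2star ∧
      -- diagonal entries
      HasDerivAt (fun D1 => f1 D1 D2star) j11 0 ∧
      HasDerivAt (fun D2 => f2 0 D2) j22 D2star ∧
      -- both diagonal entries negative: stable node
      j11 < 0 ∧ j22 < 0 := by
  simp only [hf1, hf2]
  refine ⟨_, _, ?_, hasDerivAt_competition_left _ _ _ _ _ _,
    hasDerivAt_competition_right _ _ _ _ _ _, ?_, ?_⟩
  · simpa using hasDerivAt_const D2star (0 : ℝ)
  all_goals subst hα1 hα2 hβ1 hβ2 hδ1 hδ2 hγ1 hγ2 hμ hN hD2star; norm_num
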